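/- Fix b = −1/2. Define w : ℕ × ℕ → ℝ by w_{n,m} = Σ_{ρ=max{n,m}}^{n+m} C(m, ρ−n)·C(ρ, m)·(−1)^{n+m−ρ}·2^{m−ρ} for m ≥ 0. Then w satisfies w_{n,m} − w_{n+1,m} − (1/2)·w_{n,m+1} + w_{n+1,m+1} = 0 for all n, m ≥ 0 and satisfies w_{0,m} = 1 and w_{n,0} = 2^{−n}. -/
import Mathlib


/-- Explicit solution of the initial-boundary value problem for
`w − w₁₀ − (1/2) w₀₁ + w₁₁ = 0` with data `w_{n,0} = 2^{−n}`, `w_{0,m} = 1`. -/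
noncomputable def wSolHalf (n m : ℕ) : ℝ :=
  ∑ ρ ∈ Finset.Icc (max n m) (n + m),
    (Nat.choose m (ρ - n) : ℝ) * (Nat.choose ρ m : ℝ) * (-1 : ℝ)^(n + m - ρ)
      * (2 : ℝ)^((m : ℤ) - (ρ : ℤ))

noncomputable def cTerm (n m k : ℕ) : ℝ :=
  (Nat.choose m k : ℝ) * (Nat.choose (n+k) m : ℝ) * (-1:ℝ)^m * (-1:ℝ)^k * 2^m / (2^n * 2^k)

lemma wSolHalf_eq (n m : ℕ) :
    wSolHalf n m = ∑ k ∈ Finset.range (m+1), cTerm n m k := by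
  have h2 : (2:ℝ) ≠ 0 := two_ne_zero
  unfold wSolHalf
  have hsub : ∑ ρ ∈ Finset.Icc (max n m) (n + m),
      (Nat.choose m (ρ - n) : ℝ) * (Nat.choose ρ m : ℝ) * (-1 : ℝ)^(n + m - ρ)
        * (2 : ℝ)^((m : ℤ) - (ρ : ℤ))
      = ∑ ρ ∈ Finset.Icc n (n + m),
      (Nat.choose m (ρ - n) : ℝ) * (Nat.choose ρ m : ℝ) * (-1 : ℝ)^(n + m - ρ)
        * (2 : ℝ)^((m : ℤ) - (ρ : ℤ)) := by
    refine Finset.sum_subset ?_ ?_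
    · intro x hx
      simp only [Finset.mem_Icc, max_le_iff, le_max_iff] at hx ⊢
      omega
    · intro x hx hx'
      simp only [Finset.mem_Icc] at hx hx'
      have hxm : x < m := by omega
      rw [Nat.choose_eq_zero_of_lt hxm]
      simp
  have hIcc : Finset.Icc n (n+m) = (Finset.range (m+1)).map ⟨(n + ·), add_right_injective n⟩ := by
    ext x
    simp only [Finset.mem_Icc, Finset.mem_map, Finset.mem_range, Function.Embedding.coeFn_mk]
    constructor
    · intro h; exact ⟨x - n, by omega, by omega⟩
    · rintro ⟨a, ha, rfl⟩; omega
  rw [hsub, hIcc, Finset.sum_map]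
  refine Finset.sum_congr rfl ?_
  intro i hi
  rw [Finset.mem_range] at hi
  simp only [Function.Embedding.coeFn_mk]
  have him : i ≤ m := by omega
  unfold cTerm
  rw [show n + i - n = i by omega, show n + m - (n + i) = m - i by omega]
  have hsgn : (-1:ℝ)^(m-i) = (-1:ℝ)^m * (-1:ℝ)^i := by
    have h1 : (-1:ℝ)^(m-i) * (-1:ℝ)^i = (-1:ℝ)^m := by
      rw [← pow_add]; congr 1; omega
    have h2 : ((-1:ℝ)^i) * ((-1:ℝ)^i) = 1 := by
      rw [← pow_add, ← two_mul, pow_mul]; norm_num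
    calc (-1:ℝ)^(m-i) = (-1:ℝ)^(m-i) * ((-1:ℝ)^i * (-1:ℝ)^i) := by rw [h2, mul_one]
      _ = ((-1:ℝ)^(m-i) * (-1:ℝ)^i) * (-1:ℝ)^i := by ring
      _ = (-1:ℝ)^m * (-1:ℝ)^i := by rw [h1]
  rw [hsgn]
  have hz : (2:ℝ)^((m:ℤ) - ((n+i : ℕ) : ℤ)) = 2^m / (2^n * 2^i) := by
    rw [show (m:ℤ) - ((n+i : ℕ) : ℤ) = (m:ℤ) + (-(n:ℤ)) + (-(i:ℤ)) by push_cast; ring,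
      zpow_add₀ h2, zpow_add₀ h2, zpow_neg, zpow_neg, zpow_natCast, zpow_natCast, zpow_natCast]
    ring
  rw [hz]
  ring

lemma cTerm_zero (n m k : ℕ) (h : m < k) : cTerm n m k = 0 := by
  unfold cTerm
  rw [Nat.choose_eq_zero_of_lt h]
  simp

lemma wSolHalf_eq' (n m N : ℕ) (hN : m + 1 ≤ N) :
    wSolHalf n m = ∑ k ∈ Finset.range N, cTerm n m k := by
  rw [wSolHalf_eq]
  refine Finset.sum_subset ?_ ?_
  · exact Finset.range_subset_range.mpr hN
  · intro x hx hx'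
    simp only [Finset.mem_range, not_lt] at hx hx'
    exact cTerm_zero n m x (by omega)

noncomputable def vTerm (n m k : ℕ) : ℝ :=
  (-1:ℝ)^m * (-1:ℝ)^k * (Nat.choose m k : ℝ) * (Nat.choose (n+k+1) m : ℝ) * 2^m / (2 * 2^n * 2^k)

noncomputable def fTel (n m : ℕ) : ℕ → ℝ
  | 0 => 0
  | (j+1) => -vTerm n m j

lemma key_pointwise (n m k : ℕ) :
    cTerm n m k - cTerm (n+1) m k - (1/2) * cTerm n (m+1) k + cTerm (n+1) (m+1) k
      = fTel n m (k+1) - fTel n m k := by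
  match k with
  | 0 =>
    simp only [cTerm, fTel, vTerm]
    rw [show n + 1 + 0 = n + 1 by omega, show n + 0 = n by omega,
      Nat.choose_succ_succ (n) (m)]
    simp only [Nat.succ_eq_add_one, Nat.choose_zero_right]
    push_cast
    ring
  | (j+1) =>
    simp only [cTerm, fTel, vTerm]
    rw [show n + 1 + (j+1) = (n+j+1) + 1 by omega, show n + (j+1) = n + j + 1 by omega,
      show n + j + 1 + 1 = (n+j+1)+1 by omega,
      Nat.choose_succ_succ (n+j+1) (m), Nat.choose_succ_succ (m) (j)]
    simp only [Nat.succ_eq_add_one]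
    push_cast
    ring

theorem stmt12 :
    (∀ n m : ℕ, wSolHalf n m - wSolHalf (n+1) m - (1/2) * wSolHalf n (m+1)
        + wSolHalf (n+1) (m+1) = 0)
    ∧ (∀ m : ℕ, wSolHalf 0 m = 1)
    ∧ (∀ n : ℕ, wSolHalf n 0 = (2 : ℝ)^(-(n : ℤ))) := by
  refine ⟨?_, fun m => by simp [wSolHalf], fun n => by simp [wSolHalf]⟩
  intro n m
  rw [wSolHalf_eq' n m (m+3) (by omega), wSolHalf_eq' (n+1) m (m+3) (by omega),
    wSolHalf_eq' n (m+1) (m+3) (by omega), wSolHalf_eq' (n+1) (m+1) (m+3) (by omega),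
    Finset.mul_sum, ← Finset.sum_sub_distrib, ← Finset.sum_sub_distrib,
    ← Finset.sum_add_distrib]
  have : ∀ k ∈ Finset.range (m+3),
      cTerm n m k - cTerm (n+1) m k - (1/2) * cTerm n (m+1) k + cTerm (n+1) (m+1) k
        = fTel n m (k+1) - fTel n m k := fun k _ => key_pointwise n m k
  rw [Finset.sum_congr rfl this, Finset.sum_range_sub (fTel n m)]
  simp [fTel, vTerm, Nat.choose_eq_zero_of_lt (show m < m + 2 by omega)]
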